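/- arXiv:2102.04947 — 6 statements merged into one kernel-verified Lean document; each statement's English description precedes it below -/
import Mathlib

section
/- The derivative of the complete elliptic integral of the first kind satisfies dK/dk = E(k)/(k(1-k²)) - K(k)/k for all 0 < k < 1. -/
/-!
Write `Δ = √(1 - k² sin² θ)`. Differentiating under the integral sign gives
`K'(k) = ∫ k sin² θ / Δ³`, and since `k² sin² θ = 1 - Δ²` this is `(∫ Δ⁻³ - K) / k`.
The integral of `Δ⁻³` is reduced to `E` by the exact derivative
`d/dθ (k² sin θ cos θ / Δ) = Δ - (1 - k²) / Δ³`, whose primitive vanishes at `0` and `π / 2`.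
-/

open Real MeasureTheory Set Filter

noncomputable def Kel (k : ℝ) : ℝ :=
  ∫ θ in (0:ℝ)..(π/2), 1 / Real.sqrt (1 - k^2 * Real.sin θ ^ 2)

noncomputable def Eel (k : ℝ) : ℝ :=
  ∫ θ in (0:ℝ)..(π/2), Real.sqrt (1 - k^2 * Real.sin θ ^ 2)

noncomputable def ellipticDelta (k θ : ℝ) : ℝ := √(1 - k ^ 2 * sin θ ^ 2)

namespace ellipticDelta

lemma one_sub_sq_mul_sin_sq_pos {k : ℝ} (hk : k ^ 2 < 1) (θ : ℝ) : 0 < 1 - k ^ 2 * sin θ ^ 2 := by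
  nlinarith [sin_sq_le_one θ, sq_nonneg (sin θ)]

lemma pos {k : ℝ} (hk : k ^ 2 < 1) (θ : ℝ) : 0 < ellipticDelta k θ :=
  sqrt_pos.mpr (one_sub_sq_mul_sin_sq_pos hk θ)

lemma sq_eq {k : ℝ} (hk : k ^ 2 < 1) (θ : ℝ) : ellipticDelta k θ ^ 2 = 1 - k ^ 2 * sin θ ^ 2 :=
  sq_sqrt (one_sub_sq_mul_sin_sq_pos hk θ).le

lemma continuous (k : ℝ) : Continuous (ellipticDelta k) := by
  unfold ellipticDelta; fun_prop

lemma sqrt_one_sub_le {k c : ℝ} (hkc : k ^ 2 ≤ c) (θ : ℝ) : √(1 - c) ≤ ellipticDelta k θ :=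
  sqrt_le_sqrt (by nlinarith [sin_sq_le_one θ, sq_nonneg (sin θ), sq_nonneg k])

lemma hasDerivAt_one_div {k : ℝ} (hk : k ^ 2 < 1) (θ : ℝ) :
    HasDerivAt (fun x => 1 / ellipticDelta x θ) (k * sin θ ^ 2 / ellipticDelta k θ ^ 3) k := by
  have hu : HasDerivAt (fun x : ℝ => 1 - x ^ 2 * sin θ ^ 2) (-(2 * k * sin θ ^ 2)) k := by
    simpa using ((hasDerivAt_pow 2 k).mul_const (sin θ ^ 2)).const_sub 1
  have hΔ := (hasDerivAt_sqrt (one_sub_sq_mul_sin_sq_pos hk θ).ne').comp k hu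
  refine ((hasDerivAt_const k (1 : ℝ)).div hΔ (pos hk θ).ne').congr_deriv ?_
  have h := pos hk θ
  simp only [Function.comp_apply]
  unfold ellipticDelta at *
  generalize √(1 - k ^ 2 * sin θ ^ 2) = D at *
  field_simp
  ring

lemma hasDerivAt_sq_mul_sin_mul_cos_div {k : ℝ} (hk : k ^ 2 < 1) (θ : ℝ) :
    HasDerivAt (fun θ => k ^ 2 * (sin θ * cos θ / ellipticDelta k θ))
      (ellipticDelta k θ - (1 - k ^ 2) / ellipticDelta k θ ^ 3) θ := by
  have hu : HasDerivAt (fun θ => 1 - k ^ 2 * sin θ ^ 2) (-(k ^ 2 * (2 * sin θ * cos θ))) θ := by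
    simpa using (((hasDerivAt_sin θ).pow 2).const_mul (k ^ 2)).const_sub 1
  have hΔ := (hasDerivAt_sqrt (one_sub_sq_mul_sin_sq_pos hk θ).ne').comp θ hu
  refine ((((hasDerivAt_sin θ).mul (hasDerivAt_cos θ)).div hΔ (pos hk θ).ne').const_mul
    (k ^ 2)).congr_deriv ?_
  have h := pos hk θ
  have hsq := sq_eq hk θ
  have hc : cos θ ^ 2 = 1 - sin θ ^ 2 := by rw [← sin_sq_add_cos_sq θ]; ring
  simp only [Function.comp_apply, Pi.mul_apply]
  unfold ellipticDelta at *
  generalize √(1 - k ^ 2 * sin θ ^ 2) = D at *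
  field_simp
  linear_combination (k ^ 2 * (1 - 2 * sin θ ^ 2) - (1 - k ^ 2 * sin θ ^ 2) - D ^ 2) * hsq
    + (k ^ 4 * sin θ ^ 2 + k ^ 2 * D ^ 2) * hc

lemma continuous_div_pow {k : ℝ} (hk : k ^ 2 < 1) {f : ℝ → ℝ} (hf : Continuous f) (n : ℕ) :
    Continuous fun θ => f θ / ellipticDelta k θ ^ n :=
  hf.div ((continuous k).pow n) fun θ => (pow_pos (pos hk θ) n).ne'

lemma continuous_one_div {k : ℝ} (hk : k ^ 2 < 1) : Continuous fun θ => 1 / ellipticDelta k θ := by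
  simpa using continuous_div_pow hk (continuous_const (y := 1)) 1

lemma abs_mul_sin_sq_div_pow_three_le {x c : ℝ} (hxc : x ^ 2 ≤ c) (hc : c < 1) (θ : ℝ) :
    |x * sin θ ^ 2 / ellipticDelta x θ ^ 3| ≤ 1 / √(1 - c) ^ 3 := by
  have hx : x ^ 2 < 1 := hxc.trans_lt hc
  have hnum : |x * sin θ ^ 2| ≤ 1 := by
    rw [abs_mul, abs_of_nonneg (sq_nonneg (sin θ))]
    exact mul_le_one₀ (abs_le_one_iff_mul_self_le_one.mpr (by nlinarith)) (sq_nonneg _)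
      (sin_sq_le_one θ)
  rw [abs_div, abs_of_pos (pow_pos (pos hx θ) 3)]
  exact div_le_div₀ zero_le_one hnum (pow_pos (sqrt_pos.mpr (by linarith)) 3)
    (pow_le_pow_left₀ (sqrt_nonneg _) (sqrt_one_sub_le hxc θ) 3)

end ellipticDelta

open ellipticDelta Topology

lemma Eel_eq_integral_ellipticDelta (k : ℝ) : Eel k = ∫ θ in (0:ℝ)..π/2, ellipticDelta k θ := rfl

lemma Kel_eq_integral_one_div_ellipticDelta (k : ℝ) :
    Kel k = ∫ θ in (0:ℝ)..π/2, 1 / ellipticDelta k θ := rfl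

theorem integral_one_sub_sq_div_ellipticDelta_pow_three {k : ℝ} (hk : k ^ 2 < 1) :
    ∫ θ in (0:ℝ)..π/2, (1 - k ^ 2) / ellipticDelta k θ ^ 3 = Eel k := by
  have hcont := continuous_div_pow hk (continuous_const (y := 1 - k ^ 2)) 3
  have hFTC := intervalIntegral.integral_eq_sub_of_hasDerivAt
    (fun θ _ => hasDerivAt_sq_mul_sin_mul_cos_div hk θ)
    (((continuous k).sub hcont).intervalIntegrable 0 (π / 2))
  rw [intervalIntegral.integral_sub ((continuous k).intervalIntegrable _ _)
    (hcont.intervalIntegrable _ _)] at hFTC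
  simp only [sin_pi_div_two, cos_pi_div_two, mul_zero, zero_div, sin_zero, cos_zero, mul_one,
    sub_self] at hFTC
  rw [Eel_eq_integral_ellipticDelta]
  linarith

theorem hasDerivAt_Kel {k : ℝ} (hk : k ^ 2 < 1) :
    HasDerivAt Kel (∫ θ in (0:ℝ)..π/2, k * sin θ ^ 2 / ellipticDelta k θ ^ 3) k := by
  obtain ⟨c, hkc, hc⟩ := exists_between hk
  have hs : {x : ℝ | x ^ 2 < c} ∈ 𝓝 k :=
    (isOpen_lt (continuous_pow 2) continuous_const).mem_nhds hkc
  refine (intervalIntegral.hasDerivAt_integral_of_dominated_loc_of_deriv_le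
    (F := fun x θ => 1 / ellipticDelta x θ) (F' := fun x θ => x * sin θ ^ 2 / ellipticDelta x θ ^ 3)
    (a := 0) (b := π / 2) (bound := fun _ => 1 / √(1 - c) ^ 3) (μ := volume) hs
    (Eventually.of_forall fun x => ((continuous x).measurable.const_div 1).aestronglyMeasurable)
    ?_ ?_ ?_ intervalIntegrable_const ?_).2
  · exact (continuous_one_div hk).intervalIntegrable _ _
  · exact (continuous_div_pow hk (by fun_prop) 3).aestronglyMeasurable
  · exact Eventually.of_forall fun θ _ x hx => abs_mul_sin_sq_div_pow_three_le hx.le hc θ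
  · exact Eventually.of_forall fun θ _ x hx => hasDerivAt_one_div (hx.trans hc) θ

theorem integral_mul_sin_sq_div_ellipticDelta_pow_three {k : ℝ} (hk0 : k ≠ 0) (hk : k ^ 2 < 1) :
    ∫ θ in (0:ℝ)..π/2, k * sin θ ^ 2 / ellipticDelta k θ ^ 3
      = Eel k / (k * (1 - k ^ 2)) - Kel k / k := by
  have h1k : 1 - k ^ 2 ≠ 0 := by linarith
  have hpt : ∀ θ ∈ uIcc (0:ℝ) (π/2), k * sin θ ^ 2 / ellipticDelta k θ ^ 3 =
      (1 - k ^ 2) / ellipticDelta k θ ^ 3 / (k * (1 - k ^ 2)) - 1 / ellipticDelta k θ / k := by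
    intro θ _
    have hΔ := pos hk θ
    have hsq := sq_eq hk θ
    field_simp
    linear_combination hsq
  rw [intervalIntegral.integral_congr hpt, intervalIntegral.integral_sub,
    intervalIntegral.integral_div, intervalIntegral.integral_div,
    integral_one_sub_sq_div_ellipticDelta_pow_three hk, Kel_eq_integral_one_div_ellipticDelta]
  · exact ((continuous_div_pow hk continuous_const 3).div_const _).intervalIntegrable _ _
  · exact ((continuous_one_div hk).div_const _).intervalIntegrable _ _

theorem deriv_K (k : ℝ) (hk0 : 0 < k) (hk1 : k < 1) :
    HasDerivAt Kel (Eel k / (k * (1 - k^2)) - Kel k / k) k := by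
  have hk : k ^ 2 < 1 := by nlinarith
  rw [← integral_mul_sin_sq_div_ellipticDelta_pow_three hk0.ne' hk]
  exact hasDerivAt_Kel hk
end

section
/- The complete elliptic integral of the first kind satisfies the Gauß (Landen-type) transformation: K(k) = (1 + k₁) K(k₁), where k' = √(1-k²) and k₁ = (1-k')/(1+k'), for all 0 < k < 1. -/
open Real MeasureTheory Set Filter

/-!
Write `K(k) = I(1, k')` with Gauss's integral `I(a, b) = ∫₀^{π/2} (a² cos²θ + b² sin²θ)^{-1/2} dθ`,
which is homogeneous of degree `-1` in `(a, b)`. The substitution `t = b tan θ` turns `I(a, b)`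
into `∫₀^∞ dt / √((t² + a²)(t² + b²))`, and Newman's substitution `u = (t - ab/t)/2`, a bijection
of `(0, ∞)` onto `ℝ`, shows that this integral is invariant under `(a, b) ↦ ((a + b)/2, √(ab))`.
For `(a, b) = (1, k')` the new pair is `(1 + k')/2 • (1, √(1 - k₁²))`, so homogeneity gives
`K(k) = 2/(1 + k') • K(k₁) = (1 + k₁) K(k₁)`.
-/

noncomputable def gaussIntegral (a b : ℝ) : ℝ :=
  ∫ θ in (0:ℝ)..(π / 2), (√(a ^ 2 * cos θ ^ 2 + b ^ 2 * sin θ ^ 2))⁻¹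

noncomputable def invSqrtQuartic (a b t : ℝ) : ℝ :=
  (√((t ^ 2 + a ^ 2) * (t ^ 2 + b ^ 2)))⁻¹

theorem integral_eq_two_smul_integral_Ioi_of_even {E : Type*} [NormedAddCommGroup E]
    [NormedSpace ℝ E] {f : ℝ → E} (hf : Integrable f) (heven : ∀ x, f (-x) = f x) :
    ∫ x, f x = (2 : ℝ) • ∫ x in Ioi 0, f x := by
  have hIic : ∫ x in Iic 0, f x = ∫ x in Ioi 0, f x := by
    simpa only [heven, neg_zero] using (integral_comp_neg_Ioi 0 f).symm
  rw [← intervalIntegral.integral_Iic_add_Ioi hf.integrableOn hf.integrableOn, hIic, two_smul]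

theorem Kel_eq_gaussIntegral {k : ℝ} (hk : k ^ 2 ≤ 1) :
    Kel k = gaussIntegral 1 √(1 - k ^ 2) := by
  refine intervalIntegral.integral_congr fun θ _ ↦ ?_
  rw [one_div, sq_sqrt (by linarith), one_pow, one_mul]
  congr 2
  linear_combination -sin_sq_add_cos_sq θ

theorem gaussIntegral_mul (c a b : ℝ) :
    gaussIntegral (c * a) (c * b) = |c|⁻¹ * gaussIntegral a b := by
  rw [gaussIntegral, gaussIntegral, ← intervalIntegral.integral_const_mul]
  refine intervalIntegral.integral_congr fun θ _ ↦ ?_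
  have : (c * a) ^ 2 * cos θ ^ 2 + (c * b) ^ 2 * sin θ ^ 2
      = c ^ 2 * (a ^ 2 * cos θ ^ 2 + b ^ 2 * sin θ ^ 2) := by ring
  simp only [this, sqrt_mul (sq_nonneg c), sqrt_sq_eq_abs, mul_inv]

theorem continuous_invSqrtQuartic {a b : ℝ} (ha : 0 < a) (hb : 0 < b) :
    Continuous (invSqrtQuartic a b) :=
  Continuous.inv₀ (by fun_prop) fun t ↦ by positivity

theorem integrable_invSqrtQuartic {a b : ℝ} (ha : 0 < a) (hb : 0 < b) :
    Integrable (invSqrtQuartic a b) := by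
  obtain ⟨m, hm0, hm1, hma, hmb⟩ : ∃ m : ℝ, 0 < m ∧ m ≤ 1 ∧ m ≤ a ∧ m ≤ b :=
    ⟨min (min a b) 1, by positivity, min_le_right _ _, (min_le_left _ _).trans (min_le_left _ _),
      (min_le_left _ _).trans (min_le_right _ _)⟩
  have hsq : ∀ c t : ℝ, m ≤ c → m ^ 2 * (1 + t ^ 2) ≤ t ^ 2 + c ^ 2 := fun c t hc ↦ by
    nlinarith [mul_le_mul_of_nonneg_right (pow_le_one₀ hm0.le hm1 : m ^ 2 ≤ 1) (sq_nonneg t),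
      pow_le_pow_left₀ hm0.le hc 2]
  have hbound : ∀ t, ‖invSqrtQuartic a b t‖ ≤ (m ^ 2)⁻¹ * (1 + t ^ 2)⁻¹ := fun t ↦ by
    have : m ^ 2 * (1 + t ^ 2) ≤ √((t ^ 2 + a ^ 2) * (t ^ 2 + b ^ 2)) := by
      rw [le_sqrt (by positivity) (by positivity), sq]
      exact mul_le_mul (hsq a t hma) (hsq b t hmb) (by positivity) (by positivity)
    rw [norm_of_nonneg (by unfold invSqrtQuartic; positivity), ← mul_inv]
    exact inv_anti₀ (by positivity) this
  exact (integrable_inv_one_add_sq.const_mul _).mono'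
    (continuous_invSqrtQuartic ha hb).aestronglyMeasurable (.of_forall hbound)

theorem image_const_mul_tan_Ioo {b : ℝ} (hb : 0 < b) :
    (fun θ ↦ b * tan θ) '' Ioo 0 (π / 2) = Ioi 0 := by
  ext t
  constructor
  · rintro ⟨θ, ⟨hθ0, hθ⟩, rfl⟩
    exact mul_pos hb (tan_pos_of_pos_of_lt_pi_div_two hθ0 hθ)
  · intro ht
    refine ⟨arctan (t / b), ⟨?_, arctan_lt_pi_div_two _⟩, ?_⟩
    · simpa using arctan_strictMono (div_pos (mem_Ioi.1 ht) hb)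
    · simp only [tan_arctan, mul_div_cancel₀ _ hb.ne']

theorem invSqrtQuartic_const_mul_tan {a b θ : ℝ} (ha : 0 < a) (hb : 0 < b)
    (hθ : θ ∈ Ioo (-(π / 2)) (π / 2)) :
    |b / cos θ ^ 2| * invSqrtQuartic a b (b * tan θ)
      = (√(a ^ 2 * cos θ ^ 2 + b ^ 2 * sin θ ^ 2))⁻¹ := by
  have hc : 0 < cos θ := cos_pos_of_mem_Ioo hθ
  have hE : 0 < a ^ 2 * cos θ ^ 2 + b ^ 2 * sin θ ^ 2 := by positivity
  have hprod : ((b * tan θ) ^ 2 + a ^ 2) * ((b * tan θ) ^ 2 + b ^ 2)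
      = ((b * √(a ^ 2 * cos θ ^ 2 + b ^ 2 * sin θ ^ 2)) / cos θ ^ 2) ^ 2 := by
    simp only [tan_eq_sin_div_cos, div_pow, mul_pow, sq_sqrt hE.le]
    field_simp
    linear_combination (a ^ 2 * cos θ ^ 2 + b ^ 2 * sin θ ^ 2) * sin_sq_add_cos_sq θ
  rw [invSqrtQuartic, hprod, sqrt_sq (by positivity), abs_of_pos (by positivity)]
  field_simp

theorem gaussIntegral_eq_integral_Ioi {a b : ℝ} (ha : 0 < a) (hb : 0 < b) :
    gaussIntegral a b = ∫ t in Ioi 0, invSqrtQuartic a b t := by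
  have hderiv : ∀ θ ∈ Ioo 0 (π / 2),
      HasDerivWithinAt (fun θ ↦ b * tan θ) (b / cos θ ^ 2) (Ioo 0 (π / 2)) θ := fun θ hθ ↦ by
    have hc : cos θ ≠ 0 := (cos_pos_of_mem_Ioo ⟨by linarith [hθ.1, pi_pos], hθ.2⟩).ne'
    simpa [div_eq_mul_inv] using ((hasDerivAt_tan hc).const_mul b).hasDerivWithinAt
  have hinj : InjOn (fun θ ↦ b * tan θ) (Ioo 0 (π / 2)) := fun x hx y hy h ↦
    injOn_tan (Ioo_subset_Ioo_left (by linarith [pi_pos]) hx)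
      (Ioo_subset_Ioo_left (by linarith [pi_pos]) hy) (mul_left_cancel₀ hb.ne' h)
  rw [← image_const_mul_tan_Ioo hb,
    integral_image_eq_integral_abs_deriv_smul measurableSet_Ioo hderiv hinj, gaussIntegral,
    intervalIntegral.integral_of_le (by positivity), integral_Ioc_eq_integral_Ioo]
  refine setIntegral_congr_fun measurableSet_Ioo fun θ hθ ↦ ?_
  rw [smul_eq_mul, invSqrtQuartic_const_mul_tan ha hb
    (Ioo_subset_Ioo_left (by linarith [pi_pos]) hθ)]

theorem image_half_sub_div_Ioi {c : ℝ} (hc : 0 < c) :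
    (fun t ↦ (t - c / t) / 2) '' Ioi 0 = univ := by
  refine eq_univ_of_forall fun u ↦ ?_
  have habs : |u| < √(u ^ 2 + c) := by
    rw [← sqrt_sq_eq_abs]
    exact sqrt_lt_sqrt (sq_nonneg u) (by linarith)
  have hpos : 0 < u + √(u ^ 2 + c) := by linarith [neg_abs_le u]
  refine ⟨u + √(u ^ 2 + c), hpos, ?_⟩
  have hs : √(u ^ 2 + c) ^ 2 = u ^ 2 + c := sq_sqrt (by positivity)
  field_simp
  linear_combination hs

theorem invSqrtQuartic_agm_half_sub_div {a b t : ℝ} (ha : 0 < a) (hb : 0 < b) (ht : 0 < t) :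
    |(1 + a * b / t ^ 2) / 2| * invSqrtQuartic ((a + b) / 2) √(a * b) ((t - a * b / t) / 2)
      = 2 * invSqrtQuartic a b t := by
  have hab : 0 < a * b := mul_pos ha hb
  set P := (t ^ 2 + a ^ 2) * (t ^ 2 + b ^ 2)
  have hP : 0 < P := by positivity
  have hprod :
      (((t - a * b / t) / 2) ^ 2 + ((a + b) / 2) ^ 2) * (((t - a * b / t) / 2) ^ 2 + √(a * b) ^ 2)
        = (√P * (t ^ 2 + a * b) / (4 * t ^ 2)) ^ 2 := by
    rw [sq_sqrt hab.le, div_pow (√P * _), mul_pow, sq_sqrt hP.le]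
    field_simp
    ring
  rw [invSqrtQuartic, invSqrtQuartic, hprod, sqrt_sq (by positivity), abs_of_pos (by positivity)]
  field_simp
  ring

theorem integral_Ioi_invSqrtQuartic_agm {a b : ℝ} (ha : 0 < a) (hb : 0 < b) :
    ∫ t in Ioi 0, invSqrtQuartic a b t
      = ∫ t in Ioi 0, invSqrtQuartic ((a + b) / 2) √(a * b) t := by
  set f : ℝ → ℝ := fun t ↦ (t - a * b / t) / 2
  have hab : 0 < a * b := mul_pos ha hb
  have hderiv : ∀ t ∈ Ioi (0 : ℝ),
      HasDerivWithinAt f ((1 + a * b / t ^ 2) / 2) (Ioi 0) t := fun t ht ↦ by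
    have h : HasDerivAt (fun s ↦ (s - a * b * s⁻¹) / 2) ((1 - a * b * -(t ^ 2)⁻¹) / 2) t :=
      ((hasDerivAt_id' t).fun_sub ((hasDerivAt_inv (ne_of_gt ht)).const_mul (a * b))).div_const 2
    simp only [← div_eq_mul_inv] at h
    exact h.hasDerivWithinAt.congr_deriv (by ring)
  have hmono : StrictMonoOn f (Ioi 0) := fun s hs t ht hst ↦ by
    have : a * b / t < a * b / s := div_lt_div_of_pos_left hab hs hst
    simp only [f]
    linarith
  have hsub : ∫ u, invSqrtQuartic ((a + b) / 2) √(a * b) u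
      = ∫ t in Ioi 0, 2 * invSqrtQuartic a b t := by
    rw [← setIntegral_univ, ← image_half_sub_div_Ioi hab,
      integral_image_eq_integral_abs_deriv_smul measurableSet_Ioi hderiv hmono.injOn]
    exact setIntegral_congr_fun measurableSet_Ioi fun t ht ↦
      invSqrtQuartic_agm_half_sub_div ha hb ht
  rw [integral_eq_two_smul_integral_Ioi_of_even
      (integrable_invSqrtQuartic (by positivity) (sqrt_pos.2 hab))
      (fun u ↦ by simp [invSqrtQuartic]),
    integral_const_mul, smul_eq_mul] at hsub
  linarith

theorem gaussIntegral_agm {a b : ℝ} (ha : 0 < a) (hb : 0 < b) :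
    gaussIntegral a b = gaussIntegral ((a + b) / 2) √(a * b) := by
  rw [gaussIntegral_eq_integral_Ioi ha hb, integral_Ioi_invSqrtQuartic_agm ha hb,
    gaussIntegral_eq_integral_Ioi (by positivity) (sqrt_pos.2 (mul_pos ha hb))]

theorem gauss_transform_K (k k' k₁ : ℝ) (hk0 : 0 < k) (hk1 : k < 1)
    (hk' : k' = Real.sqrt (1 - k^2)) (hk₁ : k₁ = (1 - k') / (1 + k')) :
    Kel k = (1 + k₁) * Kel k₁ := by
  have hk'0 : 0 < k' := hk' ▸ sqrt_pos.2 (by nlinarith)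
  have hc : 0 < (1 + k') / 2 := by linarith
  have hk₁sq : 1 - k₁ ^ 2 = (√k' / ((1 + k') / 2)) ^ 2 := by
    simp only [hk₁, div_pow, sq_sqrt hk'0.le]
    field_simp
    ring
  have hinv : ((1 + k') / 2)⁻¹ = 1 + k₁ := by
    rw [hk₁]
    field_simp
    ring
  calc Kel k = gaussIntegral 1 k' := hk' ▸ Kel_eq_gaussIntegral (by nlinarith)
    _ = gaussIntegral ((1 + k') / 2) √(1 * k') := gaussIntegral_agm one_pos hk'0
    _ = gaussIntegral ((1 + k') / 2 * 1) ((1 + k') / 2 * √(1 - k₁ ^ 2)) := by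
      rw [hk₁sq, sqrt_sq (by positivity), mul_div_cancel₀ _ hc.ne', mul_one, one_mul]
    _ = (1 + k₁) * Kel k₁ := by
      rw [gaussIntegral_mul, abs_of_pos hc,
        Kel_eq_gaussIntegral (sub_nonneg.1 (hk₁sq ▸ sq_nonneg _)), hinv]
end

section
/- For real numbers a > c > 0, the integral ∫_0^π √((a + c cos t)/(a - c cos t)³) dt equals 2E(k)/(a - c) with modulus k = 2√(ac)/(a+c). -/
open Real MeasureTheory Set Filter

/-!
Substitute `cos t = (c + a cos E) / (a + c cos E)`, the relation between the true and the
eccentric anomaly on an ellipse of eccentricity `c / a`. Then `dt = √(a² - c²) dE / (a + c cos E)`,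
`a + c cos t = (a² + c² + 2ac cos E) / (a + c cos E)` and `a - c cos t = (a² - c²) / (a + c cos E)`,
so the integrand becomes `√(a² + c² + 2ac cos E) / (a² - c²)`. Halving the angle,
`a² + c² + 2ac cos 2θ = (a + c)² (1 - k² sin² θ)`, so the remaining integral is `2 (a + c) E(k)`.
-/

noncomputable def trueAnomaly (a c E : ℝ) : ℝ :=
  arccos ((c + a * cos E) / (a + c * cos E))

section TrueAnomaly

variable {a c : ℝ}

lemma add_mul_cos_pos (h : |c| < a) (E : ℝ) : 0 < a + c * cos E := by
  have : |c * cos E| ≤ |c| := by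
    rw [abs_mul]; exact mul_le_of_le_one_right (abs_nonneg c) (abs_cos_le_one E)
  linarith [neg_abs_le (c * cos E)]

lemma sub_mul_cos_pos (h : |c| < a) (E : ℝ) : 0 < a - c * cos E := by
  simpa [sub_eq_add_neg, ← neg_mul] using add_mul_cos_pos (c := -c) (by rwa [abs_neg]) E

lemma sq_sub_sq_pos_of_abs_lt (h : |c| < a) : 0 < a ^ 2 - c ^ 2 := by
  nlinarith [abs_nonneg c, sq_abs c]

lemma one_sub_div_sq_eq_mul_sin_sq (E : ℝ) (hq : a + c * cos E ≠ 0) :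
    1 - ((c + a * cos E) / (a + c * cos E)) ^ 2
      = (a ^ 2 - c ^ 2) * sin E ^ 2 / (a + c * cos E) ^ 2 := by
  rw [sin_sq]; field_simp; ring

lemma cos_trueAnomaly (h : |c| < a) (E : ℝ) :
    cos (trueAnomaly a c E) = (c + a * cos E) / (a + c * cos E) := by
  have hq := add_mul_cos_pos h E
  have hd := sq_sub_sq_pos_of_abs_lt h
  have : ((c + a * cos E) / (a + c * cos E)) ^ 2 ≤ 1 := by
    have := one_sub_div_sq_eq_mul_sin_sq E hq.ne'
    have : 0 ≤ (a ^ 2 - c ^ 2) * sin E ^ 2 / (a + c * cos E) ^ 2 := by positivity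
    linarith
  exact cos_arccos (by nlinarith) (by nlinarith)

lemma hasDerivAt_trueAnomaly (h : |c| < a) {E : ℝ} (hE : E ∈ Ioo 0 π) :
    HasDerivAt (trueAnomaly a c) (√(a ^ 2 - c ^ 2) / (a + c * cos E)) E := by
  have hq := add_mul_cos_pos h E
  have hd := sq_sub_sq_pos_of_abs_lt h
  have hsin : 0 < sin E := sin_pos_of_pos_of_lt_pi hE.1 hE.2
  have hs := sq_sqrt hd.le
  set u := (c + a * cos E) / (a + c * cos E)
  have hu : HasDerivAt (fun E => (c + a * cos E) / (a + c * cos E))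
      (-(a ^ 2 - c ^ 2) * sin E / (a + c * cos E) ^ 2) E := by
    refine ((((hasDerivAt_cos E).const_mul a).const_add c).div
      (((hasDerivAt_cos E).const_mul c).const_add a) hq.ne').congr_deriv ?_
    ring
  have hroot : √(1 - u ^ 2) = √(a ^ 2 - c ^ 2) * sin E / (a + c * cos E) := by
    rw [one_sub_div_sq_eq_mul_sin_sq E hq.ne', ← hs, ← mul_pow, ← div_pow, hs,
      sqrt_sq (by positivity)]
  have hu1 : u ^ 2 < 1 := by
    have : 0 < √(1 - u ^ 2) := by rw [hroot]; positivity
    linarith [sqrt_pos.mp this]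
  refine ((hasDerivAt_arccos (x := u) (by nlinarith) (by nlinarith)).comp E hu).congr_deriv ?_
  rw [hroot]
  field_simp
  exact hs.symm

lemma trueAnomaly_zero (h : a + c ≠ 0) : trueAnomaly a c 0 = 0 := by
  simp [trueAnomaly, add_comm c a, div_self h]

lemma trueAnomaly_pi (h : a - c ≠ 0) : trueAnomaly a c π = π := by
  have : (c + -a) / (a + -c) = -1 := by
    rw [div_eq_iff (by rwa [← sub_eq_add_neg])]; ring
  simp [trueAnomaly, this]

lemma continuous_trueAnomaly (h : |c| < a) : Continuous (trueAnomaly a c) :=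
  continuous_arccos.comp <| by
    fun_prop (disch := exact fun E => (add_mul_cos_pos h E).ne')

theorem integral_comp_trueAnomaly_mul (h : |c| < a) {g : ℝ → ℝ}
    (hg : ContinuousOn g (Icc 0 π)) :
    ∫ E in (0:ℝ)..π, g (trueAnomaly a c E) * (√(a ^ 2 - c ^ 2) / (a + c * cos E))
      = ∫ t in (0:ℝ)..π, g t := by
  have hadd : a + c ≠ 0 := by linarith [neg_abs_le c]
  have hsub : a - c ≠ 0 := by linarith [le_abs_self c]
  have := intervalIntegral.integral_comp_mul_deriv'' (continuous_trueAnomaly h).continuousOn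
    (a := 0) (b := π) (f' := fun E => √(a ^ 2 - c ^ 2) / (a + c * cos E)) (fun E hE => ?_)
    (continuousOn_const.div (by fun_prop) fun E _ => (add_mul_cos_pos h E).ne') (hg.mono ?_)
  · rwa [trueAnomaly_zero hadd, trueAnomaly_pi hsub] at this
  · rw [min_eq_left pi_pos.le, max_eq_right pi_pos.le] at hE
    exact (hasDerivAt_trueAnomaly h hE).hasDerivWithinAt
  · rintro _ ⟨E, -, rfl⟩
    exact ⟨arccos_nonneg _, arccos_le_pi _⟩

end TrueAnomaly

lemma sq_add_sq_add_two_mul_mul_cos_nonneg (a c E : ℝ) : 0 ≤ a ^ 2 + c ^ 2 + 2 * a * c * cos E := by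
  nlinarith [mul_nonneg (neg_le_iff_add_nonneg.mp (neg_one_le_cos E)) (sq_nonneg (a + c)),
    mul_nonneg (sub_nonneg.mpr (cos_le_one E)) (sq_nonneg (a - c))]

lemma sqrt_div_cube_trueAnomaly_mul {a c : ℝ} (h : |c| < a) (E : ℝ) :
    √((a + c * cos (trueAnomaly a c E)) / (a - c * cos (trueAnomaly a c E)) ^ 3)
        * (√(a ^ 2 - c ^ 2) / (a + c * cos E))
      = √(a ^ 2 + c ^ 2 + 2 * a * c * cos E) / (a ^ 2 - c ^ 2) := by
  have hq := add_mul_cos_pos h E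
  have hd := sq_sub_sq_pos_of_abs_lt h
  have hs := sq_sqrt hd.le
  have hP := sq_sqrt (sq_add_sq_add_two_mul_mul_cos_nonneg a c E)
  have hcube : (√(a ^ 2 - c ^ 2) ^ 3) ^ 2 = (a ^ 2 - c ^ 2) ^ 3 := by
    rw [← pow_mul, pow_mul', hs]
  have hplus : a + c * cos (trueAnomaly a c E)
      = (a ^ 2 + c ^ 2 + 2 * a * c * cos E) / (a + c * cos E) := by
    rw [cos_trueAnomaly h]; field_simp; ring
  have hminus : a - c * cos (trueAnomaly a c E) = (a ^ 2 - c ^ 2) / (a + c * cos E) := by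
    rw [cos_trueAnomaly h]; field_simp; ring
  have hsq : (a + c * cos (trueAnomaly a c E)) / (a - c * cos (trueAnomaly a c E)) ^ 3
      = (√(a ^ 2 + c ^ 2 + 2 * a * c * cos E) * (a + c * cos E) / √(a ^ 2 - c ^ 2) ^ 3) ^ 2 := by
    rw [hplus, hminus, div_pow _ (√(a ^ 2 - c ^ 2) ^ 3), mul_pow, hP, hcube]
    field_simp
  rw [hsq, sqrt_sq (by positivity)]
  field_simp
  rw [hs]

lemma Eel_two_sqrt_mul_div_add {a c : ℝ} (hac : 0 ≤ a * c) (h : 0 < a + c) :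
    Eel (2 * √(a * c) / (a + c))
      = (∫ E in (0:ℝ)..π, √(a ^ 2 + c ^ 2 + 2 * a * c * cos E)) / (2 * (a + c)) := by
  have hθ : ∀ θ, 1 - (2 * √(a * c) / (a + c)) ^ 2 * sin θ ^ 2
      = (a ^ 2 + c ^ 2 + 2 * a * c * cos (2 * θ)) / (a + c) ^ 2 := by
    intro θ
    rw [div_pow, mul_pow, sq_sqrt hac, cos_two_mul, sin_sq]
    field_simp
    ring
  have hdouble := intervalIntegral.integral_comp_mul_left (a := 0) (b := π / 2)
    (fun E => √(a ^ 2 + c ^ 2 + 2 * a * c * cos E)) two_ne_zero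
  simp only [mul_zero, mul_div_cancel₀ π two_ne_zero, smul_eq_mul] at hdouble
  simp only [Eel, hθ, sqrt_div' _ (sq_nonneg _), sqrt_sq h.le, intervalIntegral.integral_div,
    hdouble]
  field_simp

theorem integral_cos_ratio (a c : ℝ) (hc : 0 < c) (hac : c < a) :
    ∫ t in (0:ℝ)..π, Real.sqrt ((a + c * Real.cos t) / (a - c * Real.cos t)^3)
      = 2 * Eel (2 * Real.sqrt (a * c) / (a + c)) / (a - c) := by
  have hca : |c| < a := abs_lt.mpr ⟨by linarith, hac⟩
  have hcont : Continuous fun t => √((a + c * cos t) / (a - c * cos t) ^ 3) := by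
    fun_prop (disch := exact fun t => pow_ne_zero 3 (sub_mul_cos_pos hca t).ne')
  rw [← integral_comp_trueAnomaly_mul hca hcont.continuousOn]
  simp only [sqrt_div_cube_trueAnomaly_mul hca, intervalIntegral.integral_div]
  rw [Eel_two_sqrt_mul_div_add (mul_nonneg (by linarith) hc.le) (by linarith),
    show a ^ 2 - c ^ 2 = (a - c) * (a + c) by ring]
  have : a - c ≠ 0 := by linarith
  have : a + c ≠ 0 := by linarith
  field_simp
end

section
/- For fixed a > 0 and c = √(a²+b²) with b > 0, the combined area integral of one period of the patched nodoid, 4πab² ∫_0^π √((c + a cos t)/(c - a cos t)³) dt, equals 8πa(a+c)E(2√(ac)/(a+c)). -/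
open Real MeasureTheory Set Filter

/-!
Put `μ = a / (b + c)`, so that `a : b : c = 2μ : 1 - μ² : 1 + μ²`, and substitute `u = ψ(t)`,
where `ψ` is the boundary angle of the disc automorphism `z ↦ (z - μ) / (1 - μ z)`. Then
`ψ' = b / (c - a cos t)` and `a² + c² + 2ac cos ψ = b² (c + a cos t) / (c - a cos t)`, so `b²` times
the nodoid integral is `∫₀^π √(a² + c² + 2ac cos u) du`. Writing `u = 2θ` and
`a² + c² + 2ac cos 2θ = (a + c)² (1 - k² sin² θ)` with `k = 2√(ac) / (a + c)` turns this into
`2 (a + c) E(k)`.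
-/

lemma cos_two_mul_arctan_div (x : ℝ) {y : ℝ} (hy : y ≠ 0) :
    cos (2 * arctan (x / y)) = (y ^ 2 - x ^ 2) / (y ^ 2 + x ^ 2) := by
  rw [cos_two_mul, cos_sq_arctan]
  field_simp
  ring

lemma sin_two_mul_arctan_div (x : ℝ) {y : ℝ} (hy : y ≠ 0) :
    sin (2 * arctan (x / y)) = 2 * x * y / (y ^ 2 + x ^ 2) := by
  rw [sin_two_mul, sin_arctan, cos_arctan]
  field_simp
  rw [sq_sqrt (by positivity)]
  field_simp

/-- For `|μ| < 1`, a continuous branch of `arg ((e^{it} - μ) / (1 - μ e^{it}))`. -/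
noncomputable def mobiusAngle (μ t : ℝ) : ℝ :=
  t + 2 * arctan (μ * sin t / (1 - μ * cos t))

@[simp] lemma mobiusAngle_zero (μ : ℝ) : mobiusAngle μ 0 = 0 := by
  simp [mobiusAngle]

@[simp] lemma mobiusAngle_pi (μ : ℝ) : mobiusAngle μ π = π := by
  simp [mobiusAngle]

section mobiusAngle

variable {μ : ℝ} (hμ : |μ| < 1)
include hμ

lemma one_sub_mul_cos_pos (t : ℝ) : 0 < 1 - μ * cos t := by
  have : |μ * cos t| ≤ |μ| := by
    rw [abs_mul]
    exact mul_le_of_le_one_right (abs_nonneg μ) (abs_cos_le_one t)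
  linarith [le_abs_self (μ * cos t)]

lemma one_add_sq_sub_mul_cos_pos (t : ℝ) : 0 < 1 + μ ^ 2 - 2 * μ * cos t := by
  nlinarith [one_sub_mul_cos_pos hμ t, sin_sq_add_cos_sq t, sq_nonneg (μ * sin t)]

lemma hasDerivAt_mobiusAngle (t : ℝ) :
    HasDerivAt (mobiusAngle μ) ((1 - μ ^ 2) / (1 + μ ^ 2 - 2 * μ * cos t)) t := by
  have hw := (one_sub_mul_cos_pos hμ t).ne'
  have hD := (one_add_sq_sub_mul_cos_pos hμ t).ne'
  have hu : HasDerivAt (fun t => μ * sin t / (1 - μ * cos t))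
      ((μ * cos t - μ ^ 2) / (1 - μ * cos t) ^ 2) t := by
    refine (((hasDerivAt_sin t).const_mul μ).div
      (((hasDerivAt_cos t).const_mul μ).const_sub 1) hw).congr_deriv ?_
    congr 1
    linear_combination (-μ ^ 2) * sin_sq_add_cos_sq t
  refine ((hasDerivAt_id' t).add (hu.arctan.const_mul 2)).congr_deriv ?_
  field_simp
  linear_combination (2 * μ ^ 4 - 2 * μ ^ 3 * cos t) * sin_sq_add_cos_sq t

lemma cos_mobiusAngle (t : ℝ) :
    cos (mobiusAngle μ t) = ((1 + μ ^ 2) * cos t - 2 * μ) / (1 + μ ^ 2 - 2 * μ * cos t) := by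
  have hw := (one_sub_mul_cos_pos hμ t).ne'
  have hD : (1 - μ * cos t) ^ 2 + (μ * sin t) ^ 2 = 1 + μ ^ 2 - 2 * μ * cos t := by
    linear_combination μ ^ 2 * sin_sq_add_cos_sq t
  rw [mobiusAngle, cos_add, cos_two_mul_arctan_div _ hw, sin_two_mul_arctan_div _ hw, hD,
    ← mul_div_assoc, ← mul_div_assoc, ← sub_div]
  congr 1
  linear_combination (μ ^ 2 * cos t - 2 * μ) * sin_sq_add_cos_sq t

lemma integral_comp_mobiusAngle_mul_deriv {f : ℝ → ℝ} (hf : Continuous f) :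
    ∫ t in (0:ℝ)..π, f (mobiusAngle μ t) * ((1 - μ ^ 2) / (1 + μ ^ 2 - 2 * μ * cos t)) =
      ∫ u in (0:ℝ)..π, f u := by
  have hcont : Continuous fun t => (1 - μ ^ 2) / (1 + μ ^ 2 - 2 * μ * cos t) :=
    continuous_const.div (by fun_prop) fun t => (one_add_sq_sub_mul_cos_pos hμ t).ne'
  simpa using intervalIntegral.integral_comp_mul_deriv (a := 0) (b := π)
    (fun t _ => hasDerivAt_mobiusAngle hμ t) hcont.continuousOn hf

lemma sq_add_sq_add_mul_cos_mobiusAngle (t : ℝ) :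
    (2 * μ) ^ 2 + (1 + μ ^ 2) ^ 2 + 2 * (2 * μ) * (1 + μ ^ 2) * cos (mobiusAngle μ t) =
      (1 - μ ^ 2) ^ 2 * ((1 + μ ^ 2 + 2 * μ * cos t) / (1 + μ ^ 2 - 2 * μ * cos t)) := by
  have hD := one_add_sq_sub_mul_cos_pos hμ t
  have hcos := (eq_div_iff hD.ne').1 (cos_mobiusAngle hμ t)
  rw [mul_div_assoc', eq_div_iff hD.ne']
  linear_combination 4 * μ * (1 + μ ^ 2) * hcos

lemma sq_mul_sqrt_div_cube_eq_comp_mobiusAngle {a b c s : ℝ} (hs : 0 < s) (ha : a = 2 * μ * s)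
    (hb : b = (1 - μ ^ 2) * s) (hc : c = (1 + μ ^ 2) * s) (t : ℝ) :
    b ^ 2 * √((c + a * cos t) / (c - a * cos t) ^ 3) =
      √(a ^ 2 + c ^ 2 + 2 * a * c * cos (mobiusAngle μ t)) *
        ((1 - μ ^ 2) / (1 + μ ^ 2 - 2 * μ * cos t)) := by
  subst ha hb hc
  have hμ₁ : 0 < 1 - μ ^ 2 := by nlinarith [abs_nonneg μ, sq_abs μ]
  have hD := one_add_sq_sub_mul_cos_pos hμ t
  have hP : 0 < 1 + μ ^ 2 + 2 * μ * cos t := by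
    simpa using one_add_sq_sub_mul_cos_pos (μ := -μ) (by rwa [abs_neg]) t
  rw [show (2 * μ * s) ^ 2 + ((1 + μ ^ 2) * s) ^ 2 +
        2 * (2 * μ * s) * ((1 + μ ^ 2) * s) * cos (mobiusAngle μ t) =
      s ^ 2 * ((2 * μ) ^ 2 + (1 + μ ^ 2) ^ 2 + 2 * (2 * μ) * (1 + μ ^ 2) * cos (mobiusAngle μ t))
      by ring, sq_add_sq_add_mul_cos_mobiusAngle hμ,
    show (1 + μ ^ 2) * s - 2 * μ * s * cos t = s * (1 + μ ^ 2 - 2 * μ * cos t) by ring,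
    show (1 + μ ^ 2) * s + 2 * μ * s * cos t = s * (1 + μ ^ 2 + 2 * μ * cos t) by ring,
    ← sqrt_sq (by positivity : 0 ≤ ((1 - μ ^ 2) * s) ^ 2),
    ← sqrt_sq (div_pos hμ₁ hD).le, ← sqrt_mul (by positivity), ← sqrt_mul (by positivity)]
  congr 1
  field_simp

end mobiusAngle

lemma integral_sqrt_sq_add_sq_add_mul_cos {a c : ℝ} (ha : 0 ≤ a) (hc : 0 ≤ c) :
    ∫ u in (0:ℝ)..π, √(a ^ 2 + c ^ 2 + 2 * a * c * cos u) =
      2 * (a + c) * Eel (2 * √(a * c) / (a + c)) := by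
  rcases (add_nonneg ha hc).eq_or_lt with hac | hac
  · obtain ⟨rfl, rfl⟩ : a = 0 ∧ c = 0 := ⟨by linarith, by linarith⟩
    simp
  have hsq (θ : ℝ) : √(1 - (2 * √(a * c) / (a + c)) ^ 2 * sin θ ^ 2) =
      √(a ^ 2 + c ^ 2 + 2 * a * c * cos (2 * θ)) / (a + c) := by
    rw [← sqrt_sq hac.le, ← sqrt_div' _ (sq_nonneg _), sqrt_sq hac.le]
    congr 1
    rw [div_pow, mul_pow, sq_sqrt (mul_nonneg ha hc), cos_two_mul]
    field_simp
    linear_combination (-4 * a * c) * sin_sq_add_cos_sq θ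
  have hscale := intervalIntegral.integral_comp_mul_left
    (fun u => √(a ^ 2 + c ^ 2 + 2 * a * c * cos u)) (two_ne_zero (α := ℝ)) (a := 0) (b := π / 2)
  rw [Eel, intervalIntegral.integral_congr fun θ _ => hsq θ, intervalIntegral.integral_div]
  simp only [mul_zero, smul_eq_mul] at hscale
  rw [hscale, show 2 * (π / 2) = π by ring]
  field_simp

lemma exists_pythagorean_param {a b c : ℝ} (ha : 0 < a) (hb : 0 < b) (hc : 0 < c)
    (habc : c ^ 2 = a ^ 2 + b ^ 2) :
    ∃ s μ : ℝ, 0 < s ∧ 0 < μ ∧ μ < 1 ∧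
      a = 2 * μ * s ∧ b = (1 - μ ^ 2) * s ∧ c = (1 + μ ^ 2) * s := by
  have hbc : 0 < b + c := by positivity
  refine ⟨(b + c) / 2, a / (b + c), by positivity, by positivity,
    (div_lt_one hbc).2 (by nlinarith), by field_simp, ?_, ?_⟩
  · field_simp
    linear_combination -habc
  · field_simp
    linear_combination habc

theorem nodoid_area (a b c : ℝ) (ha : 0 < a) (hb : 0 < b)
    (hc : c = Real.sqrt (a^2 + b^2)) :
    4 * π * a * b^2 * ∫ t in (0:ℝ)..π,
        Real.sqrt ((c + a * Real.cos t) / (c - a * Real.cos t)^3)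
      = 8 * π * a * (a + c) * Eel (2 * Real.sqrt (a * c) / (a + c)) := by
  have hc₀ : 0 < c := hc ▸ sqrt_pos.2 (by positivity)
  have habc : c ^ 2 = a ^ 2 + b ^ 2 := hc ▸ sq_sqrt (by positivity)
  obtain ⟨s, μ, hs, hμ₀, hμ₁, has, hbs, hcs⟩ := exists_pythagorean_param ha hb hc₀ habc
  have hμ : |μ| < 1 := abs_lt.2 ⟨by linarith, hμ₁⟩
  have key : b ^ 2 * ∫ t in (0:ℝ)..π, √((c + a * cos t) / (c - a * cos t) ^ 3) =
      2 * (a + c) * Eel (2 * √(a * c) / (a + c)) :=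
    calc _ = ∫ t in (0:ℝ)..π, √(a ^ 2 + c ^ 2 + 2 * a * c * cos (mobiusAngle μ t)) *
          ((1 - μ ^ 2) / (1 + μ ^ 2 - 2 * μ * cos t)) := by
          rw [← intervalIntegral.integral_const_mul]
          exact intervalIntegral.integral_congr fun t _ =>
            sq_mul_sqrt_div_cube_eq_comp_mobiusAngle hμ hs has hbs hcs t
      _ = ∫ u in (0:ℝ)..π, √(a ^ 2 + c ^ 2 + 2 * a * c * cos u) :=
          integral_comp_mobiusAngle_mul_deriv hμ (by fun_prop :
            Continuous fun u => √(a ^ 2 + c ^ 2 + 2 * a * c * cos u))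
      _ = _ := integral_sqrt_sq_add_sq_add_mul_cos ha.le hc₀.le
  linear_combination (4 * π * a) * key
end

section
/- The function c ↦ c[E(1/c) - (1 - 1/c²)K(1/c)] defined on (1, ∞) has derivative E(1/c) - K(1/c) at every c > 1; in particular it is strictly decreasing. -/
open Real MeasureTheory Set Filter

/-!
With `k = 1/c` and `R(c, θ) = √(c² - sin² θ) = c √(1 - k² sin² θ)` one has
`E(1/c) = (∫ R) / c` and `K(1/c) = c ∫ 1/R`, so the function in question is
`L(c) = ∫ R - (c² - 1) ∫ 1/R = ∫ cos² θ / R`. Differentiating under the integral sign gives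
`L'(c) = -c ∫ cos² θ / R³`, and since `d/dθ (sin θ cos θ / R) = c² cos² θ / R³ - sin² θ / R`
vanishes in integral over `[0, π/2]`, this equals `-(1/c) ∫ sin² θ / R = E(1/c) - K(1/c)`,
which is negative because `√u < 1/√u` for `0 < u < 1`.
-/

theorem Eel_lt_Kel {k : ℝ} (hk₀ : k ≠ 0) (hk₁ : |k| < 1) : Eel k < Kel k := by
  have hk : k ^ 2 < 1 := sq_lt_one_iff_abs_lt_one k |>.2 hk₁
  have hu : ∀ θ, 0 < 1 - k ^ 2 * sin θ ^ 2 := fun θ => by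
    nlinarith [sin_sq_le_one θ, sq_nonneg (sin θ), sq_nonneg k]
  have hle : ∀ θ, √(1 - k ^ 2 * sin θ ^ 2) ≤ 1 := fun θ =>
    sqrt_le_one.2 (by nlinarith [sq_nonneg (sin θ), sq_nonneg k])
  refine intervalIntegral.integral_lt_integral_of_continuousOn_of_le_of_exists_lt
    (by positivity) (by fun_prop)
    (continuousOn_const.div (by fun_prop) fun θ _ => (sqrt_pos.2 (hu θ)).ne')
    (fun θ _ => (hle θ).trans (one_le_one_div (sqrt_pos.2 (hu θ)) (hle θ)))
    ⟨π / 2, right_mem_Icc.2 (by positivity), ?_⟩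
  have hlt : √(1 - k ^ 2 * sin (π / 2) ^ 2) < 1 := by
    rw [sin_pi_div_two, one_pow, mul_one, sqrt_lt' one_pos]
    linarith [sq_pos_of_ne_zero hk₀]
  exact hlt.trans (one_lt_one_div (sqrt_pos.2 (hu _)) hlt)

noncomputable def ellipticRoot (c θ : ℝ) : ℝ := √(c ^ 2 - sin θ ^ 2)

section ellipticRoot

variable {c : ℝ}

theorem sq_sub_sin_sq_pos (hc : 1 < c) (θ : ℝ) : 0 < c ^ 2 - sin θ ^ 2 := by
  nlinarith [sin_sq_le_one θ]

theorem ellipticRoot_pos (hc : 1 < c) (θ : ℝ) : 0 < ellipticRoot c θ :=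
  sqrt_pos.2 (sq_sub_sin_sq_pos hc θ)

theorem ellipticRoot_sq (hc : 1 < c) (θ : ℝ) : ellipticRoot c θ ^ 2 = c ^ 2 - sin θ ^ 2 :=
  sq_sqrt (sq_sub_sin_sq_pos hc θ).le

theorem continuous_ellipticRoot (c : ℝ) : Continuous (ellipticRoot c) := by
  unfold ellipticRoot
  fun_prop

theorem continuous_div_ellipticRoot_pow (hc : 1 < c) {g : ℝ → ℝ} (hg : Continuous g) (n : ℕ) :
    Continuous fun θ => g θ / ellipticRoot c θ ^ n :=
  hg.div ((continuous_ellipticRoot c).pow n) fun θ => (pow_pos (ellipticRoot_pos hc θ) n).ne'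

theorem intervalIntegrable_div_ellipticRoot (hc : 1 < c) {g : ℝ → ℝ} (hg : Continuous g)
    (a b : ℝ) : IntervalIntegrable (fun θ => g θ / ellipticRoot c θ) volume a b := by
  simpa using (continuous_div_ellipticRoot_pow hc hg 1).intervalIntegrable a b

theorem hasDerivAt_ellipticRoot_left (hc : 1 < c) (θ : ℝ) :
    HasDerivAt (fun x => ellipticRoot x θ) (c / ellipticRoot c θ) c := by
  unfold ellipticRoot
  convert ((hasDerivAt_pow 2 c).sub_const (sin θ ^ 2)).sqrt (sq_sub_sin_sq_pos hc θ).ne' using 1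
  norm_num
  ring

theorem hasDerivAt_ellipticRoot_right (hc : 1 < c) (θ : ℝ) :
    HasDerivAt (ellipticRoot c) (-(sin θ * cos θ) / ellipticRoot c θ) θ := by
  unfold ellipticRoot
  convert (((hasDerivAt_sin θ).fun_pow 2).const_sub (c ^ 2)).sqrt
    (sq_sub_sin_sq_pos hc θ).ne' using 1
  norm_num
  ring

theorem sqrt_one_sub_one_div_sq_mul_sin_sq (hc : 1 < c) (θ : ℝ) :
    √(1 - (1 / c) ^ 2 * sin θ ^ 2) = ellipticRoot c θ / c := by
  have hc₀ : 0 < c := one_pos.trans hc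
  have h : 1 - (1 / c) ^ 2 * sin θ ^ 2 = (c ^ 2 - sin θ ^ 2) / c ^ 2 := by field_simp
  rw [h, sqrt_div (sq_sub_sin_sq_pos hc θ).le, sqrt_sq hc₀.le, ellipticRoot]

theorem Eel_one_div (hc : 1 < c) : Eel (1 / c) = (∫ θ in (0:ℝ)..(π/2), ellipticRoot c θ) / c := by
  rw [Eel, ← intervalIntegral.integral_div]
  exact intervalIntegral.integral_congr fun θ _ => sqrt_one_sub_one_div_sq_mul_sin_sq hc θ

theorem Kel_one_div (hc : 1 < c) :
    Kel (1 / c) = c * ∫ θ in (0:ℝ)..(π/2), 1 / ellipticRoot c θ := by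
  rw [Kel, ← intervalIntegral.integral_const_mul]
  refine intervalIntegral.integral_congr fun θ _ => ?_
  simp only [sqrt_one_sub_one_div_sq_mul_sin_sq hc θ, one_div_div, mul_one_div]

theorem sqrt_sq_sub_one_le_ellipticRoot {a : ℝ} (ha : 1 < a) (hac : a ≤ c) (θ : ℝ) :
    √(a ^ 2 - 1) ≤ ellipticRoot c θ :=
  sqrt_le_sqrt (by nlinarith [sin_sq_le_one θ])

theorem hasDerivAt_div_ellipticRoot_left (hc : 1 < c) (a θ : ℝ) :
    HasDerivAt (fun x => a / ellipticRoot x θ) (-(c * (a / ellipticRoot c θ ^ 3))) c := by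
  have hR := (ellipticRoot_pos hc θ).ne'
  refine ((hasDerivAt_const c a).fun_div (hasDerivAt_ellipticRoot_left hc θ) hR).congr_deriv ?_
  field_simp
  ring

theorem hasDerivAt_sin_mul_cos_div_ellipticRoot (hc : 1 < c) (θ : ℝ) :
    HasDerivAt (fun t => sin t * cos t / ellipticRoot c t)
      (c ^ 2 * (cos θ ^ 2 / ellipticRoot c θ ^ 3) - sin θ ^ 2 / ellipticRoot c θ) θ := by
  have hR := (ellipticRoot_pos hc θ).ne'
  refine (((hasDerivAt_sin θ).mul (hasDerivAt_cos θ)).fun_div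
    (hasDerivAt_ellipticRoot_right hc θ) hR).congr_deriv ?_
  rw [Pi.mul_apply]
  field_simp
  linear_combination cos θ ^ 2 * ellipticRoot_sq hc θ

theorem integral_cos_sq_div_ellipticRoot (hc : 1 < c) :
    c * (Eel (1 / c) - (1 - 1 / c ^ 2) * Kel (1 / c)) =
      ∫ θ in (0:ℝ)..(π/2), cos θ ^ 2 / ellipticRoot c θ := by
  have hc₀ : c ≠ 0 := (one_pos.trans hc).ne'
  have hpt : ∀ θ, cos θ ^ 2 / ellipticRoot c θ
      = ellipticRoot c θ - (c ^ 2 - 1) * (1 / ellipticRoot c θ) := fun θ => by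
    have hR := (ellipticRoot_pos hc θ).ne'
    field_simp
    linear_combination -ellipticRoot_sq hc θ + cos_sq_add_sin_sq θ
  rw [intervalIntegral.integral_congr fun θ _ => hpt θ, intervalIntegral.integral_sub
    ((continuous_ellipticRoot c).intervalIntegrable _ _)
    ((intervalIntegrable_div_ellipticRoot hc continuous_const _ _).const_mul _),
    intervalIntegral.integral_const_mul, Eel_one_div hc, Kel_one_div hc]
  field_simp

theorem sq_mul_integral_cos_sq_div_ellipticRoot_pow_three (hc : 1 < c) :
    c ^ 2 * ∫ θ in (0:ℝ)..(π/2), cos θ ^ 2 / ellipticRoot c θ ^ 3 =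
      ∫ θ in (0:ℝ)..(π/2), sin θ ^ 2 / ellipticRoot c θ := by
  have hcont : Continuous fun θ => cos θ ^ 2 / ellipticRoot c θ ^ 3 :=
    continuous_div_ellipticRoot_pow hc (by fun_prop) 3
  have hFTC := intervalIntegral.integral_eq_sub_of_hasDerivAt
    (fun θ _ => hasDerivAt_sin_mul_cos_div_ellipticRoot hc θ)
    (((hcont.intervalIntegrable 0 (π / 2)).const_mul _).sub
      (intervalIntegrable_div_ellipticRoot hc (g := fun θ => sin θ ^ 2) (by fun_prop) _ _))
  rw [intervalIntegral.integral_sub ((hcont.intervalIntegrable _ _).const_mul _)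
    (intervalIntegrable_div_ellipticRoot hc (g := fun θ => sin θ ^ 2) (by fun_prop) _ _),
    intervalIntegral.integral_const_mul] at hFTC
  simp only [cos_pi_div_two, sin_zero, mul_zero, zero_mul, zero_div, sub_self] at hFTC
  exact sub_eq_zero.1 hFTC

theorem Eel_one_div_sub_Kel_one_div (hc : 1 < c) :
    Eel (1 / c) - Kel (1 / c) = -(c * ∫ θ in (0:ℝ)..(π/2), cos θ ^ 2 / ellipticRoot c θ ^ 3) := by
  have hc₀ : c ≠ 0 := (one_pos.trans hc).ne'
  have hpt : ∀ θ, sin θ ^ 2 / ellipticRoot c θ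
      = c ^ 2 * (1 / ellipticRoot c θ) - ellipticRoot c θ := fun θ => by
    have hR := (ellipticRoot_pos hc θ).ne'
    field_simp
    linear_combination ellipticRoot_sq hc θ
  have hsin : ∫ θ in (0:ℝ)..(π/2), sin θ ^ 2 / ellipticRoot c θ
      = c ^ 2 * (∫ θ in (0:ℝ)..(π/2), 1 / ellipticRoot c θ)
        - ∫ θ in (0:ℝ)..(π/2), ellipticRoot c θ := by
    rw [intervalIntegral.integral_congr fun θ _ => hpt θ, intervalIntegral.integral_sub
      ((intervalIntegrable_div_ellipticRoot hc continuous_const _ _).const_mul _)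
      ((continuous_ellipticRoot c).intervalIntegrable _ _), intervalIntegral.integral_const_mul]
  have hcube := sq_mul_integral_cos_sq_div_ellipticRoot_pow_three hc
  rw [Eel_one_div hc, Kel_one_div hc]
  field_simp
  linear_combination hcube + hsin

theorem hasDerivAt_integral_cos_sq_div_ellipticRoot (hc : 1 < c) :
    HasDerivAt (fun x => ∫ θ in (0:ℝ)..(π/2), cos θ ^ 2 / ellipticRoot x θ)
      (-(c * ∫ θ in (0:ℝ)..(π/2), cos θ ^ 2 / ellipticRoot c θ ^ 3)) c := by
  obtain ⟨a, ha, hac⟩ : ∃ a, 1 < a ∧ a < c := ⟨(1 + c) / 2, by linarith, by linarith⟩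
  have hcos : Continuous fun θ => cos θ ^ 2 := by fun_prop
  have hbound : ∀ θ, ∀ x ∈ Ioo a (c + 1),
      ‖-(x * (cos θ ^ 2 / ellipticRoot x θ ^ 3))‖ ≤ (c + 1) * (1 / √(a ^ 2 - 1) ^ 3) := by
    intro θ x hx
    have hm := sqrt_pos.2 (by nlinarith : 0 < a ^ 2 - 1)
    have hx₀ : 0 < x := by linarith [hx.1]
    have hR₀ := ellipticRoot_pos (ha.trans hx.1) θ
    have hR := sqrt_sq_sub_one_le_ellipticRoot ha hx.1.le θ
    rw [norm_neg, norm_of_nonneg (by positivity)]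
    gcongr
    · exact hx.2.le
    · exact cos_sq_le_one θ
  have h := intervalIntegral.hasDerivAt_integral_of_dominated_loc_of_deriv_le
    (a := 0) (b := π / 2) (F := fun x θ => cos θ ^ 2 / ellipticRoot x θ)
    (F' := fun x θ => -(x * (cos θ ^ 2 / ellipticRoot x θ ^ 3)))
    (Ioo_mem_nhds hac (lt_add_one c))
    (Eventually.of_forall fun x =>
      (hcos.measurable.div (continuous_ellipticRoot x).measurable).aestronglyMeasurable)
    (intervalIntegrable_div_ellipticRoot hc hcos _ _)
    ((continuous_div_ellipticRoot_pow hc hcos 3).const_mul c).neg.aestronglyMeasurable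
    (ae_of_all _ fun θ _ => hbound θ) intervalIntegrable_const
    (ae_of_all _ fun θ _ x hx => hasDerivAt_div_ellipticRoot_left (ha.trans hx.1) _ θ)
  rw [intervalIntegral.integral_neg, intervalIntegral.integral_const_mul] at h
  exact h.2

end ellipticRoot

theorem deriv_L :
    (∀ c : ℝ, 1 < c →
      HasDerivAt (fun c : ℝ => c * (Eel (1/c) - (1 - 1/c^2) * Kel (1/c)))
        (Eel (1/c) - Kel (1/c)) c) ∧
    StrictAntiOn (fun c : ℝ => c * (Eel (1/c) - (1 - 1/c^2) * Kel (1/c)))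
      (Set.Ioi 1) := by
  have hL : ∀ c : ℝ, 1 < c →
      HasDerivAt (fun c : ℝ => c * (Eel (1/c) - (1 - 1/c^2) * Kel (1/c)))
        (Eel (1/c) - Kel (1/c)) c := fun c hc => by
    rw [Eel_one_div_sub_Kel_one_div hc]
    refine (hasDerivAt_integral_cos_sq_div_ellipticRoot hc).congr_of_eventuallyEq ?_
    filter_upwards [Ioi_mem_nhds hc] with x hx using integral_cos_sq_div_ellipticRoot hx
  refine ⟨hL, strictAntiOn_of_deriv_neg (convex_Ioi 1)
    (fun x hx => (hL x hx).continuousAt.continuousWithinAt) fun x hx => ?_⟩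
  rw [interior_Ioi] at hx
  have hx₀ : 0 < x := one_pos.trans hx
  rw [(hL x hx).deriv, sub_neg]
  exact Eel_lt_Kel (one_div_pos.2 hx₀).ne'
    (by rwa [abs_of_pos (one_div_pos.2 hx₀), div_lt_one hx₀])
end

section
/- There exists c₀ > 1 such that for all 1 < c < c₀ there is a unique y = y(c) > 0 solving the balancing equation (y + ε)E(y/(y+ε)) = c[E(1/c) - (1-1/c²)K(1/c)], where ε = c - 1; moreover y(c) → 1 as c → 1⁺. -/
open Real MeasureTheory Set Filter

/-! Write the left side as `G(ε, y) = ∫₀^{π/2} √(y² cos² θ + 2yε + ε²) dθ`.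
For `ε > 0` it is continuous and strictly increasing in `y ≥ 0`, with `G(ε, 0) = επ/2` and
`y ≤ G(ε, y) ≤ y + (π/2) √(2yε + ε²)`. The right side tends to `E(1) = 1` as `c → 1⁺`,
because `(1 - k²) K(k) ≤ (π/2) √(1 - k²)`. Hence for `c` near `1` it exceeds `επ/2`, the
intermediate value theorem gives the unique root, and the two bounds squeeze it to `1`. -/

open Topology

/-- `(y + ε) E(y / (y + ε))`, a quarter of the perimeter of the ellipse with semi-major axis
`y + ε` and focal distance `y`, written without the division. -/
noncomputable def unduloidArc (ε y : ℝ) : ℝ :=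
  ∫ θ in (0:ℝ)..(π/2), √((y + ε) ^ 2 - y ^ 2 * sin θ ^ 2)

noncomputable def nodoidArc (c : ℝ) : ℝ :=
  c * (Eel (1/c) - (1 - 1/c^2) * Kel (1/c))

lemma sqrt_sq_add_le {a b : ℝ} (ha : 0 ≤ a) (hb : 0 ≤ b) : √(a ^ 2 + b) ≤ a + √b := by
  rw [sqrt_le_left (by positivity)]
  nlinarith [sq_sqrt hb, sqrt_nonneg b]

lemma sq_add_sub_sq_mul_sin_sq (ε y θ : ℝ) :
    (y + ε) ^ 2 - y ^ 2 * sin θ ^ 2 = (y * cos θ) ^ 2 + (2 * y * ε + ε ^ 2) := by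
  linear_combination (-y ^ 2) * sin_sq_add_cos_sq θ

section unduloidArc

variable {ε y : ℝ}

lemma mul_Eel_div_eq_unduloidArc (h : 0 < y + ε) :
    (y + ε) * Eel (y / (y + ε)) = unduloidArc ε y := by
  rw [Eel, unduloidArc, ← intervalIntegral.integral_const_mul]
  refine intervalIntegral.integral_congr fun θ _ => ?_
  have : (y + ε) ^ 2 - y ^ 2 * sin θ ^ 2
      = (y + ε) ^ 2 * (1 - (y / (y + ε)) ^ 2 * sin θ ^ 2) := by
    field_simp
  rw [this, sqrt_mul (sq_nonneg _), sqrt_sq h.le]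

variable (ε) in
lemma continuous_unduloidArc : Continuous (unduloidArc ε) :=
  intervalIntegral.continuous_parametric_intervalIntegral_of_continuous'
    (f := fun y θ => √((y + ε) ^ 2 - y ^ 2 * sin θ ^ 2)) (by fun_prop) _ _

lemma unduloidArc_zero (hε : 0 ≤ ε) : unduloidArc ε 0 = ε * (π/2) := by
  simp [unduloidArc, sqrt_sq hε, mul_comm]

lemma le_unduloidArc (hε : 0 ≤ ε) (hy : 0 ≤ y) : y ≤ unduloidArc ε y := by
  calc y = ∫ θ in (0:ℝ)..(π/2), y * cos θ := by simp
    _ ≤ unduloidArc ε y := by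
      refine intervalIntegral.integral_mono (by positivity)
        (Continuous.intervalIntegrable (by fun_prop) _ _)
        (Continuous.intervalIntegrable (by fun_prop) _ _) fun θ => ?_
      rw [sq_add_sub_sq_mul_sin_sq]
      calc y * cos θ ≤ |y * cos θ| := le_abs_self _
        _ = √((y * cos θ) ^ 2) := (sqrt_sq_eq_abs _).symm
        _ ≤ _ := sqrt_le_sqrt (by nlinarith)

lemma unduloidArc_le (hε : 0 ≤ ε) (hy : 0 ≤ y) :
    unduloidArc ε y ≤ y + π/2 * √(2 * y * ε + ε ^ 2) := by
  calc unduloidArc ε y ≤ ∫ θ in (0:ℝ)..(π/2), (y * cos θ + √(2 * y * ε + ε ^ 2)) := by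
        refine intervalIntegral.integral_mono_on (by positivity)
          (Continuous.intervalIntegrable (by fun_prop) _ _)
          (Continuous.intervalIntegrable (by fun_prop) _ _) fun θ hθ => ?_
        have hcos : 0 ≤ cos θ := cos_nonneg_of_mem_Icc ⟨by linarith [hθ.1, pi_pos], hθ.2⟩
        rw [sq_add_sub_sq_mul_sin_sq]
        exact sqrt_sq_add_le (by positivity) (by positivity)
    _ = y + π/2 * √(2 * y * ε + ε ^ 2) := by
        rw [intervalIntegral.integral_add (Continuous.intervalIntegrable (by fun_prop) _ _)
          (Continuous.intervalIntegrable (by fun_prop) _ _)]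
        simp [mul_comm]

lemma strictMonoOn_unduloidArc (hε : 0 < ε) : StrictMonoOn (unduloidArc ε) (Ici 0) := by
  intro y₁ (hy₁ : 0 ≤ y₁) y₂ (hy₂ : 0 ≤ y₂) hlt
  have hpoint : ∀ θ,
      √((y₁ + ε) ^ 2 - y₁ ^ 2 * sin θ ^ 2) < √((y₂ + ε) ^ 2 - y₂ ^ 2 * sin θ ^ 2) := by
    intro θ
    simp only [sq_add_sub_sq_mul_sin_sq, mul_pow]
    have : y₁ ^ 2 * cos θ ^ 2 ≤ y₂ ^ 2 * cos θ ^ 2 := by gcongr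
    exact sqrt_lt_sqrt (by positivity) (by nlinarith)
  exact intervalIntegral.integral_lt_integral_of_continuousOn_of_le_of_exists_lt (by positivity)
    (by fun_prop) (by fun_prop) (fun θ _ => (hpoint θ).le)
    ⟨0, ⟨le_rfl, by positivity⟩, hpoint 0⟩

lemma exists_unique_unduloidArc_eq (hε : 0 < ε) {R : ℝ} (hR : ε * (π/2) < R) :
    ∃! y, 0 < y ∧ unduloidArc ε y = R := by
  have hR0 : 0 < R := lt_trans (by positivity) hR
  have hRmem : R ∈ Ioc (unduloidArc ε 0) (unduloidArc ε R) :=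
    ⟨(unduloidArc_zero hε.le).symm ▸ hR, le_unduloidArc hε.le hR0.le⟩
  obtain ⟨y, hy, hyR⟩ :=
    intermediate_value_Ioc hR0.le (continuous_unduloidArc ε).continuousOn hRmem
  refine ⟨y, ⟨hy.1, hyR⟩, fun y' ⟨hy', hy'R⟩ => ?_⟩
  exact (strictMonoOn_unduloidArc hε).injOn hy'.le hy.1.le (hy'R.trans hyR.symm)

lemma unduloidArc_sub_le (hε : 0 ≤ ε) (hy : 0 ≤ y) :
    unduloidArc ε y - π/2 * √(2 * unduloidArc ε y * ε + ε ^ 2) ≤ y := by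
  have hle := le_unduloidArc hε hy
  have : √(2 * y * ε + ε ^ 2) ≤ √(2 * unduloidArc ε y * ε + ε ^ 2) :=
    sqrt_le_sqrt (by nlinarith)
  nlinarith [unduloidArc_le hε hy, pi_pos]

end unduloidArc

lemma tendsto_of_unduloidArc_eq {ι : Type*} {l : Filter ι} {ε y R : ι → ℝ} {r : ℝ}
    (hε : Tendsto ε l (𝓝 0)) (hR : Tendsto R l (𝓝 r))
    (hy : ∀ᶠ i in l, 0 ≤ ε i ∧ 0 ≤ y i ∧ unduloidArc (ε i) (y i) = R i) :
    Tendsto y l (𝓝 r) := by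
  have hlower : Tendsto (fun i => R i - π/2 * √(2 * R i * ε i + ε i ^ 2)) l (𝓝 r) := by
    simpa using hR.sub (tendsto_const_nhds.mul (((hR.const_mul 2).mul hε).add (hε.pow 2)).sqrt)
  refine tendsto_of_tendsto_of_tendsto_of_le_of_le' hlower hR ?_ ?_
  · filter_upwards [hy] with i ⟨hεi, hyi, hi⟩
    exact hi ▸ unduloidArc_sub_le hεi hyi
  · filter_upwards [hy] with i ⟨hεi, hyi, hi⟩
    exact hi ▸ le_unduloidArc hεi hyi

lemma continuous_Eel : Continuous Eel :=
  intervalIntegral.continuous_parametric_intervalIntegral_of_continuous'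
    (f := fun k θ => √(1 - k ^ 2 * sin θ ^ 2)) (by fun_prop) _ _

lemma Eel_one : Eel 1 = 1 := by
  have : EqOn (fun θ => √(1 - 1 ^ 2 * sin θ ^ 2)) cos (uIcc 0 (π/2)) := by
    intro θ hθ
    rw [uIcc_of_le (by positivity)] at hθ
    simp only [one_pow, one_mul, ← cos_sq']
    rw [sqrt_sq (cos_nonneg_of_mem_Icc ⟨by linarith [hθ.1, pi_pos], hθ.2⟩)]
  rw [Eel, intervalIntegral.integral_congr this]
  simp

lemma Kel_nonneg (k : ℝ) : 0 ≤ Kel k :=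
  intervalIntegral.integral_nonneg (by positivity) fun θ _ => by positivity

lemma Kel_le {k : ℝ} (hk : k ^ 2 < 1) : Kel k ≤ π/2 / √(1 - k ^ 2) := by
  have hpos : ∀ θ, 0 < 1 - k ^ 2 * sin θ ^ 2 := fun θ => by
    nlinarith [sin_sq_le_one θ, sq_nonneg k]
  calc Kel k ≤ ∫ θ in (0:ℝ)..(π/2), 1 / √(1 - k ^ 2) := by
        refine intervalIntegral.integral_mono (by positivity) ?_ intervalIntegrable_const
          fun θ => ?_
        · exact Continuous.intervalIntegrable
            (continuous_const.div (by fun_prop) fun θ => (sqrt_pos.2 (hpos θ)).ne') _ _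
        · refine one_div_le_one_div_of_le (sqrt_pos.2 (by linarith)) (sqrt_le_sqrt ?_)
          nlinarith [sin_sq_le_one θ, sq_nonneg k]
    _ = π/2 / √(1 - k ^ 2) := by simp [div_eq_mul_inv]

lemma tendsto_one_sub_sq_mul_Kel :
    Tendsto (fun k => (1 - k ^ 2) * Kel k) (𝓝[<] 1) (𝓝 0) := by
  have hk : ∀ᶠ k in 𝓝[<] (1:ℝ), k ^ 2 < 1 := by
    filter_upwards [Ioo_mem_nhdsLT (show (-1:ℝ) < 1 by norm_num)] with k hk
    nlinarith [hk.1, hk.2]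
  refine squeeze_zero' ?_ ?_ (g := fun k => π/2 * √(1 - k ^ 2)) ?_
  · filter_upwards [hk] with k hk
    exact mul_nonneg (by linarith) (Kel_nonneg k)
  · filter_upwards [hk] with k hk
    calc (1 - k ^ 2) * Kel k ≤ (1 - k ^ 2) * (π/2 / √(1 - k ^ 2)) :=
          mul_le_mul_of_nonneg_left (Kel_le hk) (by linarith)
      _ = π/2 * √(1 - k ^ 2) := by rw [mul_div_left_comm, div_sqrt]
  · have : Tendsto (fun k : ℝ => π/2 * √(1 - k ^ 2)) (𝓝 1)
        (𝓝 (π/2 * √(1 - 1 ^ 2))) :=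
      (by fun_prop : Continuous fun k : ℝ => π/2 * √(1 - k ^ 2)).tendsto 1
    simpa using this.mono_left nhdsWithin_le_nhds

lemma tendsto_nodoidArc : Tendsto nodoidArc (𝓝[>] 1) (𝓝 1) := by
  have hc : Tendsto (fun c : ℝ => c) (𝓝[>] 1) (𝓝 1) :=
    tendsto_nhdsWithin_of_tendsto_nhds tendsto_id
  have hinv : Tendsto (fun c : ℝ => 1/c) (𝓝[>] 1) (𝓝[<] 1) := by
    refine tendsto_nhdsWithin_iff.2 ⟨by simpa using hc.inv₀ one_ne_zero, ?_⟩
    filter_upwards [self_mem_nhdsWithin] with c (hc : 1 < c)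
    exact (div_lt_one (by linarith)).2 hc
  have hE : Tendsto (fun c : ℝ => Eel (1/c)) (𝓝[>] 1) (𝓝 1) :=
    (continuous_Eel.tendsto' 1 1 Eel_one).comp (tendsto_nhdsWithin_iff.1 hinv).1
  have hK : Tendsto (fun c : ℝ => (1 - 1/c^2) * Kel (1/c)) (𝓝[>] 1) (𝓝 0) := by
    simpa only [Function.comp_def, one_div_pow] using tendsto_one_sub_sq_mul_Kel.comp hinv
  unfold nodoidArc
  simpa only [sub_zero, mul_one] using hc.mul (hE.sub hK)

theorem balancing_equation_solution :
    ∃ c₀ : ℝ, 1 < c₀ ∧ ∃ y : ℝ → ℝ,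
      (∀ c : ℝ, 1 < c → c < c₀ →
        (0 < y c ∧
          (y c + (c - 1)) * Eel (y c / (y c + (c - 1)))
            = c * (Eel (1/c) - (1 - 1/c^2) * Kel (1/c)) ∧
          ∀ y' : ℝ, 0 < y' →
            (y' + (c - 1)) * Eel (y' / (y' + (c - 1)))
              = c * (Eel (1/c) - (1 - 1/c^2) * Kel (1/c)) → y' = y c)) ∧
      Tendsto y (nhdsWithin 1 (Set.Ioi 1)) (nhds 1) := by
  have hε : Tendsto (fun c : ℝ => c - 1) (𝓝[>] 1) (𝓝 0) :=
    tendsto_nhdsWithin_of_tendsto_nhds (by simpa using (tendsto_id (x := 𝓝 (1:ℝ))).sub_const 1)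
  have hsolvable : ∀ᶠ c in 𝓝[>] (1:ℝ), (c - 1) * (π/2) < nodoidArc c := by
    simpa using (hε.mul_const (π/2)).eventually_lt tendsto_nodoidArc (by norm_num)
  obtain ⟨c₀, hc₀, hsol⟩ := (nhdsGT_basis (1:ℝ)).eventually_iff.mp hsolvable
  have hex : ∀ c ∈ Ioo 1 c₀, ∃! y, 0 < y ∧ unduloidArc (c - 1) y = nodoidArc c :=
    fun c hc => exists_unique_unduloidArc_eq (sub_pos.2 hc.1) (hsol hc)
  choose! y hy hyuniq using hex
  refine ⟨c₀, hc₀, y, fun c h1 h2 => ?_, ?_⟩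
  · have hc : c ∈ Ioo 1 c₀ := ⟨h1, h2⟩
    refine ⟨(hy c hc).1, ?_, fun y' hy' heq => hyuniq c hc y' ⟨hy', ?_⟩⟩
    · rw [mul_Eel_div_eq_unduloidArc (by linarith [(hy c hc).1])]
      exact (hy c hc).2
    · rwa [mul_Eel_div_eq_unduloidArc (by linarith)] at heq
  · refine tendsto_of_unduloidArc_eq hε tendsto_nodoidArc ?_
    filter_upwards [Ioo_mem_nhdsGT hc₀] with c hc
    exact ⟨by linarith [hc.1], (hy c hc).1.le, (hy c hc).2⟩
end
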